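/- In the no-process-noise case, the stochastic observability Gramian of the original system and the stochastic constructability Gramian of the dual system (with Φ̄ = reversed inverses, C̄, R̄ reversed) are equal at every intermediate step shift: F̄↑_{w-j} with respect to x̄_{N-j} equals the (w-j)-step observability Gramian of the original system with respect to x_j, for each j = 0,...,N. -/
import Mathlib


open Matrix Finset

/-- `stm Φ j d` is the state transition matrix `Φ_{j+d, j}` built from the
one-step matrices `Φ k = Φ_{k+1,k}`. -/
def stm {n : ℕ} (Φ : ℕ → Matrix (Fin n) (Fin n) ℝ) (j : ℕ) : ℕ → Matrix (Fin n) (Fin n) ℝ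
  | 0 => 1
  | d + 1 => Φ (j + d) * stm Φ j d

/-- The constructability matrix over `M+1` steps ending at time `M`, stacking
`C_{M-τ} Φ_{M,M-τ}⁻¹` for `τ = 0, …, M`. -/
noncomputable def consMat {n p : ℕ} (Φ : ℕ → Matrix (Fin n) (Fin n) ℝ)
    (C : ℕ → Matrix (Fin p) (Fin n) ℝ) (M : ℕ) : Matrix (Fin (M + 1) × Fin p) (Fin n) ℝ :=
  fun i c => (C (M - (i.1 : ℕ)) * (stm Φ (M - (i.1 : ℕ)) (i.1 : ℕ))⁻¹) i.2 c

/-- Reverse block diagonal `blkdiag (R M, …, R 0)`. -/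
def blkRrev {p : ℕ} (R : ℕ → Matrix (Fin p) (Fin p) ℝ) (M : ℕ) :
    Matrix (Fin (M + 1) × Fin p) (Fin (M + 1) × Fin p) ℝ :=
  fun i j => if i.1 = j.1 then R (M - (i.1 : ℕ)) i.2 j.2 else 0

/-- The `(M+1)`-step stochastic constructability Gramian with respect to `x_M`
(no process noise). -/
noncomputable def consGramNP {n p : ℕ} (Φ : ℕ → Matrix (Fin n) (Fin n) ℝ)
    (C : ℕ → Matrix (Fin p) (Fin n) ℝ) (R : ℕ → Matrix (Fin p) (Fin p) ℝ) (M : ℕ) :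
    Matrix (Fin n) (Fin n) ℝ :=
  (consMat Φ C M)ᵀ * (blkRrev R M)⁻¹ * consMat Φ C M

lemma blk_inv {p : ℕ} (R : ℕ → Matrix (Fin p) (Fin p) ℝ) (M : ℕ)
    (h : ∀ k, k ≤ M → IsUnit (R k).det) :
    (blkRrev R M)⁻¹ = blkRrev (fun k => (R k)⁻¹) M := by
  apply Matrix.inv_eq_right_inv
  ext ⟨i, c⟩ ⟨i', c'⟩
  simp only [Matrix.mul_apply, blkRrev, Fintype.sum_prod_type, Matrix.one_apply]
  by_cases hii : i = i'
  · subst hii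
    simp only [Prod.mk.injEq, true_and]
    rw [Finset.sum_eq_single i]
    · simp only [if_pos rfl]
      have := Matrix.mul_nonsing_inv _ (h (M - (i : ℕ)) (Nat.sub_le _ _))
      calc ∑ d, R (M - (i : ℕ)) c d * (R (M - (i : ℕ)))⁻¹ d c'
          = (R (M - (i : ℕ)) * (R (M - (i : ℕ)))⁻¹) c c' := by rw [Matrix.mul_apply]
        _ = _ := by rw [this]; simp [Matrix.one_apply]
    · intro b _ hb; simp [hb.symm, Ne.symm hb]
    · simp
  · simp only [Prod.mk.injEq, hii, false_and, if_false]
    apply Finset.sum_eq_zero; intro k _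
    apply Finset.sum_eq_zero; intro d _
    by_cases h1 : i = k
    · subst h1; simp [hii]
    · simp [h1]

lemma gram_expand {n p : ℕ} (Φ : ℕ → Matrix (Fin n) (Fin n) ℝ)
    (C : ℕ → Matrix (Fin p) (Fin n) ℝ) (R : ℕ → Matrix (Fin p) (Fin p) ℝ) (M : ℕ)
    (h : ∀ k, k ≤ M → IsUnit (R k).det) :
    consGramNP Φ C R M = ∑ i : Fin (M + 1),
      (C (M - (i : ℕ)) * (stm Φ (M - (i : ℕ)) (i : ℕ))⁻¹)ᵀ * (R (M - (i : ℕ)))⁻¹ *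
        (C (M - (i : ℕ)) * (stm Φ (M - (i : ℕ)) (i : ℕ))⁻¹) := by
  unfold consGramNP
  rw [blk_inv R M h]
  ext a b
  simp only [Matrix.mul_apply, Matrix.transpose_apply, Matrix.sum_apply,
    Fintype.sum_prod_type, blkRrev, consMat, ite_mul, mul_ite, zero_mul, mul_zero,
    Finset.sum_ite_eq, Finset.sum_ite_eq', Finset.mem_univ, if_true]
  refine Finset.sum_congr rfl fun i _ => ?_
  refine Finset.sum_congr rfl fun c _ => ?_
  congr 1
  rw [Finset.sum_comm]
  simp only [Finset.sum_ite_eq', Finset.mem_univ, if_true]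

lemma stm_succ' {n : ℕ} (Φ : ℕ → Matrix (Fin n) (Fin n) ℝ) (j : ℕ) :
    ∀ d, stm Φ j (d + 1) = stm Φ (j + 1) d * Φ j := by
  intro d
  induction d with
  | zero => simp [stm]
  | succ d ih =>
      show Φ (j + (d + 1)) * stm Φ j (d + 1) = Φ (j + 1 + d) * stm Φ (j + 1) d * Φ j
      rw [ih, ← mul_assoc, show j + (d + 1) = j + 1 + d from by omega]

lemma stm_dual_inv {n : ℕ} (Φ Φb : ℕ → Matrix (Fin n) (Fin n) ℝ) (N : ℕ)
    (hΦinv : ∀ k, IsUnit (Φ k).det)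
    (hΦ : ∀ k, k < N → Φb (N - 1 - k) = (Φ k)⁻¹) :
    ∀ i j, j + i ≤ N →
      stm Φb (N - j - i) i * stm Φ j i = 1 ∧ stm Φ j i * stm Φb (N - j - i) i = 1 := by
  intro i
  induction i with
  | zero => intro j _; simp [stm]
  | succ i ih =>
      intro j hj
      have hb : Φb (N - j - (i + 1) + i) = (Φ j)⁻¹ := by
        have : N - j - (i + 1) + i = N - 1 - j := by omega
        rw [this]; exact hΦ j (by omega)
      have hrec : N - j - (i + 1) = N - (j + 1) - i := by omega
      obtain ⟨h1, h2⟩ := ih (j + 1) (by omega)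
      constructor
      · show Φb (N - j - (i + 1) + i) * stm Φb (N - j - (i + 1)) i * stm Φ j (i + 1) = 1
        rw [hb, hrec, stm_succ', mul_assoc, ← mul_assoc (stm Φb _ i), h1, one_mul,
          Matrix.nonsing_inv_mul _ (hΦinv j)]
      · show stm Φ j (i + 1) * (Φb (N - j - (i + 1) + i) * stm Φb (N - j - (i + 1)) i) = 1
        rw [hb, hrec, stm_succ', mul_assoc, ← mul_assoc (Φ j),
          Matrix.mul_nonsing_inv _ (hΦinv j), one_mul, h2]

/-- In the no-process-noise case, with dual system
`Φ̄_{N-k,N-k-1} = Φ_{k+1,k}⁻¹`, `C̄_{N-k} = C_k`, `R̄_{N-k} = R_k`, the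
stochastic constructability Gramian of the dual system at every intermediate
step shift equals the shifted observability Gramian of the original system:
`F̄↑_{w-j}` with respect to `x̄_{N-j}` equals
`∑_{τ=j}^{w-1} Φ_{τ,j}ᵀ C_τᵀ R_τ⁻¹ C_τ Φ_{τ,j}` for each `j = 0, …, N`
(`w = N+1`). -/
theorem dual_cons_gramian_eq_shifted_obs_gramian
    {n p : ℕ} (Φ Φb : ℕ → Matrix (Fin n) (Fin n) ℝ)
    (C Cb : ℕ → Matrix (Fin p) (Fin n) ℝ)
    (R Rb : ℕ → Matrix (Fin p) (Fin p) ℝ) (N : ℕ)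
    (hΦinv : ∀ k, IsUnit (Φ k).det) (hRpos : ∀ k, (R k).PosDef)
    (hΦ : ∀ k, k < N → Φb (N - 1 - k) = (Φ k)⁻¹)
    (hC : ∀ k, k ≤ N → Cb (N - k) = C k)
    (hR : ∀ k, k ≤ N → Rb (N - k) = R k) :
    ∀ j, j ≤ N →
      consGramNP Φb Cb Rb (N - j) =
        ∑ τ ∈ Finset.Icc j N,
          (stm Φ j (τ - j))ᵀ * (C τ)ᵀ * (R τ)⁻¹ * C τ * stm Φ j (τ - j) := by
  intro j hj
  have hRb : ∀ k, k ≤ N - j → IsUnit (Rb k).det := by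
    intro k hk
    have : Rb k = R (N - k) := by
      have := hR (N - k) (Nat.sub_le _ _)
      rwa [show N - (N - k) = k from by omega] at this
    rw [this]
    exact (hRpos (N - k)).isUnit.map Matrix.detMonoidHom
  rw [gram_expand Φb Cb Rb (N - j) hRb]
  rw [← Finset.Ico_add_one_right_eq_Icc, Finset.sum_Ico_eq_sum_range,
    show N + 1 - j = N - j + 1 from by omega, ← Fin.sum_univ_eq_sum_range]
  refine Finset.sum_congr rfl fun i _ => ?_
  have hi : (i : ℕ) ≤ N - j := by omega
  have hji : j + (i : ℕ) ≤ N := by omega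
  have hMi : N - j - (i : ℕ) = N - (j + (i : ℕ)) := by omega
  have hCb : Cb (N - j - (i : ℕ)) = C (j + (i : ℕ)) := by rw [hMi]; exact hC _ hji
  have hRb' : Rb (N - j - (i : ℕ)) = R (j + (i : ℕ)) := by rw [hMi]; exact hR _ hji
  have hstm : (stm Φb (N - j - (i : ℕ)) (i : ℕ))⁻¹ = stm Φ j (i : ℕ) :=
    Matrix.inv_eq_right_inv (stm_dual_inv Φ Φb N hΦinv hΦ (i : ℕ) j hji).1
  rw [hCb, hRb', hstm, show j + (i : ℕ) - j = (i : ℕ) from by omega]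
  simp [Matrix.transpose_mul, Matrix.mul_assoc]
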